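/- Let A ∈ ℝ^{m×n}, let q ≥ 0 be an integer, and set B = (AAᵀ)^q A ∈ ℝ^{m×n}. Let Q ∈ ℝ^{m×μ} be orthonormal (QᵀQ = I_μ), and let R ∈ ℝ^{μ×ℓ}, Ω ∈ ℝ^{n×ℓ}, F ∈ ℝ^{ℓ×n} be arbitrary real matrices. Then ‖A − QQᵀA‖_F² ≤ 2‖BΩF − A‖_F² + 2‖F‖₂² · ‖QR − BΩ‖_F². -/

import Mathlib

open Matrix
open scoped BigOperators

noncomputable section

/-- Frobenius norm of a real matrix. -/
def frobNorm {m n : ℕ} (A : Matrix (Fin m) (Fin n) ℝ) : ℝ :=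
  Real.sqrt (∑ i, ∑ j, A i j ^ 2)

/-- Nonincreasing rearrangement of a finite tuple of reals. -/
def sortedDesc {n : ℕ} (f : Fin n → ℝ) : Fin n → ℝ :=
  fun k => - ((fun i => - f i) ∘ Tuple.sort (fun i => - f i)) k

/-- `sval A k` is the `(k+1)`-st largest singular value of `A` (i.e. 0-based index `k`),
the square root of the `(k+1)`-st largest eigenvalue of `AᵀA`; it is `0` for `k ≥ n`
(in particular for `k ≥ min m n`). -/
def sval {m n : ℕ} (A : Matrix (Fin m) (Fin n) ℝ) (k : ℕ) : ℝ :=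
  if h : k < n then
    Real.sqrt (sortedDesc (show (Aᵀ * A).IsHermitian by
      simpa [Matrix.conjTranspose_eq_transpose_of_trivial] using
        Matrix.isHermitian_conjTranspose_mul_self A).eigenvalues ⟨k, h⟩)
  else 0

/-- Spectral norm (ℓ²→ℓ² operator norm) of a real matrix: its largest singular value. -/
def specNorm {m n : ℕ} (A : Matrix (Fin m) (Fin n) ℝ) : ℝ := sval A 0

/-- `tailDelta A μ = Δ_{μ+1}(A) = sqrt (Σ_{k=μ+1}^{min(m,n)} σ_k(A)²)` (with 1-based σ's,
so 0-based indices `μ, …, min m n - 1`). -/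
def tailDelta {m n : ℕ} (A : Matrix (Fin m) (Fin n) ℝ) (μ : ℕ) : ℝ :=
  Real.sqrt (∑ k ∈ Finset.Ico μ (min m n), sval A k ^ 2)

end

/-! Writing `P = 1 - QQᵀ` for the projection onto the orthogonal complement of the range of `Q`,
`PQ = 0` gives `A - QQᵀA = P(A - BΩF) + P(BΩ - QR)F`. The projection `P` does not increase
Frobenius norms, right multiplication by `F` scales them by at most `‖F‖₂`, and
`‖X + Y‖² ≤ 2‖X‖² + 2‖Y‖²` combines the two terms. -/

open scoped MatrixOrder

section DotProduct

variable {ι κ : Type*} [Fintype ι] [Fintype κ]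

theorem Matrix.IsHermitian.dotProduct_mulVec_le_of_eigenvalues_le [DecidableEq ι]
    {M : Matrix ι ι ℝ} (hM : M.IsHermitian) {c : ℝ} (h : ∀ i, hM.eigenvalues i ≤ c)
    (x : ι → ℝ) : x ⬝ᵥ M *ᵥ x ≤ c * (x ⬝ᵥ x) := by
  have hle : M ≤ algebraMap ℝ (Matrix ι ι ℝ) c := by
    refine le_algebraMap_of_spectrum_le (fun r hr => ?_) hM
    obtain ⟨i, rfl⟩ := hM.spectrum_real_eq_range_eigenvalues ▸ hr
    exact h i
  have hx := (le_iff.mp hle).dotProduct_mulVec_nonneg x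
  simp only [Algebra.algebraMap_eq_smul_one, sub_mulVec, smul_mulVec, one_mulVec,
    dotProduct_sub, dotProduct_smul, smul_eq_mul, star_trivial] at hx
  linarith

theorem Matrix.mulVec_dotProduct_mulVec (C : Matrix κ ι ℝ) (v : ι → ℝ) :
    C *ᵥ v ⬝ᵥ C *ᵥ v = v ⬝ᵥ (Cᵀ * C) *ᵥ v := by
  rw [← mulVec_mulVec, dotProduct_transpose_mulVec]

/-- A bound `‖Cw‖² ≤ c‖w‖²` passes to `Cᵀ`: by Cauchy–Schwarz,
`‖Cᵀv‖⁴ = (v ⬝ᵥ CCᵀv)² ≤ ‖v‖²‖CCᵀv‖² ≤ c‖v‖²‖Cᵀv‖²`. -/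
theorem Matrix.transpose_mulVec_dotProduct_le {C : Matrix κ ι ℝ} {c : ℝ} (hc : 0 ≤ c)
    (hC : ∀ w, C *ᵥ w ⬝ᵥ C *ᵥ w ≤ c * (w ⬝ᵥ w)) (v : κ → ℝ) :
    Cᵀ *ᵥ v ⬝ᵥ Cᵀ *ᵥ v ≤ c * (v ⬝ᵥ v) := by
  set w := Cᵀ *ᵥ v
  have hv : 0 ≤ v ⬝ᵥ v := dotProduct_self_star_nonneg v
  have hkey : (w ⬝ᵥ w) ^ 2 ≤ (w ⬝ᵥ w) * (c * (v ⬝ᵥ v)) :=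
    calc (w ⬝ᵥ w) ^ 2 = (v ⬝ᵥ C *ᵥ w) ^ 2 := by rw [dotProduct_transpose_mulVec]
      _ ≤ (v ⬝ᵥ v) * (C *ᵥ w ⬝ᵥ C *ᵥ w) := by
        simpa only [dotProduct, sq] using Finset.sum_mul_sq_le_sq_mul_sq Finset.univ v (C *ᵥ w)
      _ ≤ (v ⬝ᵥ v) * (c * (w ⬝ᵥ w)) := mul_le_mul_of_nonneg_left (hC w) hv
      _ = (w ⬝ᵥ w) * (c * (v ⬝ᵥ v)) := by ring
  rcases (dotProduct_self_star_nonneg w).eq_or_lt with hw | hw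
  · exact hw ▸ mul_nonneg hc hv
  · exact le_of_mul_le_mul_left (sq (w ⬝ᵥ w) ▸ hkey) hw

theorem Matrix.one_sub_mul_transpose_mulVec_dotProduct_le [DecidableEq ι] [DecidableEq κ]
    {Q : Matrix ι κ ℝ} (hQ : Qᵀ * Q = 1) (v : ι → ℝ) :
    (1 - Q * Qᵀ) *ᵥ v ⬝ᵥ (1 - Q * Qᵀ) *ᵥ v ≤ v ⬝ᵥ v := by
  have hidem : (1 - Q * Qᵀ)ᵀ * (1 - Q * Qᵀ) = 1 - Q * Qᵀ := by
    rw [transpose_sub, transpose_one, transpose_mul, transpose_transpose, Matrix.sub_mul,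
      Matrix.one_mul, Matrix.mul_sub, Matrix.mul_one, Matrix.mul_assoc, ← Matrix.mul_assoc Qᵀ,
      hQ, Matrix.one_mul, sub_self, sub_zero]
  have hgap : v ⬝ᵥ (1 - Q * Qᵀ) *ᵥ v = v ⬝ᵥ v - Qᵀ *ᵥ v ⬝ᵥ Qᵀ *ᵥ v := by
    rw [mulVec_dotProduct_mulVec, transpose_transpose, sub_mulVec, one_mulVec, dotProduct_sub]
  have hnonneg : 0 ≤ Qᵀ *ᵥ v ⬝ᵥ Qᵀ *ᵥ v := dotProduct_self_star_nonneg _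
  rw [mulVec_dotProduct_mulVec, hidem, hgap]
  linarith

end DotProduct

theorem sortedDesc_zero_ge {n : ℕ} (f : Fin n → ℝ) (i : Fin n) :
    f i ≤ sortedDesc f ⟨0, i.pos⟩ := by
  have hzero : (⟨0, i.pos⟩ : Fin n) ≤ (Tuple.sort fun i => -f i).symm i := Nat.zero_le _
  have hmono := Tuple.monotone_sort (fun i => -f i) hzero
  simp only [Function.comp_apply, Equiv.apply_symm_apply] at hmono
  simp only [sortedDesc, Function.comp_apply]
  linarith

theorem eigenvalues_le_specNorm_sq {ℓ n : ℕ} (F : Matrix (Fin ℓ) (Fin n) ℝ)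
    (hF : (Fᵀ * F).IsHermitian) (i : Fin n) : hF.eigenvalues i ≤ specNorm F ^ 2 := by
  have hpsd : (Fᵀ * F).PosSemidef := by
    simpa only [conjTranspose_eq_transpose_of_trivial] using posSemidef_conjTranspose_mul_self F
  have hle := sortedDesc_zero_ge hF.eigenvalues i
  rw [specNorm, sval, dif_pos i.pos, Real.sq_sqrt ((hpsd.eigenvalues_nonneg i).trans hle)]
  exact hle

theorem mulVec_dotProduct_le_specNorm_sq {ℓ n : ℕ} (F : Matrix (Fin ℓ) (Fin n) ℝ)
    (v : Fin n → ℝ) : F *ᵥ v ⬝ᵥ F *ᵥ v ≤ specNorm F ^ 2 * (v ⬝ᵥ v) := by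
  have hF : (Fᵀ * F).IsHermitian := by
    simpa only [conjTranspose_eq_transpose_of_trivial] using isHermitian_conjTranspose_mul_self F
  rw [mulVec_dotProduct_mulVec]
  exact hF.dotProduct_mulVec_le_of_eigenvalues_le (eigenvalues_le_specNorm_sq F hF) v

section FrobNorm

variable {m n p : ℕ}

theorem frobNorm_sq (A : Matrix (Fin m) (Fin n) ℝ) : frobNorm A ^ 2 = ∑ i, ∑ j, A i j ^ 2 :=
  Real.sq_sqrt <| Finset.sum_nonneg fun _ _ => Finset.sum_nonneg fun _ _ => sq_nonneg _

theorem frobNorm_sq_eq_sum_col_dotProduct (A : Matrix (Fin m) (Fin n) ℝ) :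
    frobNorm A ^ 2 = ∑ j, Aᵀ j ⬝ᵥ Aᵀ j := by
  rw [frobNorm_sq, Finset.sum_comm]
  simp only [dotProduct, transpose_apply, sq]

theorem frobNorm_transpose (A : Matrix (Fin m) (Fin n) ℝ) : frobNorm Aᵀ = frobNorm A := by
  rw [frobNorm, frobNorm, Finset.sum_comm]
  rfl

theorem frobNorm_sub_comm (A B : Matrix (Fin m) (Fin n) ℝ) :
    frobNorm (A - B) = frobNorm (B - A) := by
  simp only [frobNorm, Matrix.sub_apply]
  congr 1
  exact Finset.sum_congr rfl fun i _ => Finset.sum_congr rfl fun j _ => by ring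

theorem frobNorm_add_sq_le (A B : Matrix (Fin m) (Fin n) ℝ) :
    frobNorm (A + B) ^ 2 ≤ 2 * frobNorm A ^ 2 + 2 * frobNorm B ^ 2 := by
  simp only [frobNorm_sq, Finset.mul_sum, ← Finset.sum_add_distrib]
  gcongr with i _ j _
  rw [Matrix.add_apply]
  nlinarith [sq_nonneg (A i j - B i j)]

theorem frobNorm_mul_sq_le_of_mulVec {C : Matrix (Fin p) (Fin m) ℝ} {c : ℝ}
    (hC : ∀ v, C *ᵥ v ⬝ᵥ C *ᵥ v ≤ c * (v ⬝ᵥ v)) (M : Matrix (Fin m) (Fin n) ℝ) :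
    frobNorm (C * M) ^ 2 ≤ c * frobNorm M ^ 2 := by
  simp only [frobNorm_sq_eq_sum_col_dotProduct, Finset.mul_sum, transpose_mul]
  gcongr with j
  rw [mul_apply_eq_vecMul, vecMul_transpose]
  exact hC _

theorem frobNorm_mul_sq_le_specNorm_sq (M : Matrix (Fin m) (Fin p) ℝ)
    (F : Matrix (Fin p) (Fin n) ℝ) :
    frobNorm (M * F) ^ 2 ≤ specNorm F ^ 2 * frobNorm M ^ 2 := by
  rw [← frobNorm_transpose (M * F), ← frobNorm_transpose M, transpose_mul]
  exact frobNorm_mul_sq_le_of_mulVec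
    (transpose_mulVec_dotProduct_le (sq_nonneg _) (mulVec_dotProduct_le_specNorm_sq F)) Mᵀ

theorem frobNorm_one_sub_mul_transpose_mul_sq_le {Q : Matrix (Fin m) (Fin p) ℝ}
    (hQ : Qᵀ * Q = 1) (M : Matrix (Fin m) (Fin n) ℝ) :
    frobNorm ((1 - Q * Qᵀ) * M) ^ 2 ≤ frobNorm M ^ 2 := by
  simpa only [one_mul] using frobNorm_mul_sq_le_of_mulVec (c := 1)
    (by simpa only [one_mul] using one_sub_mul_transpose_mulVec_dotProduct_le hQ) M

end FrobNorm

theorem frob_sq_proj_le_general {m n μ ℓ : ℕ}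
    (A : Matrix (Fin m) (Fin n) ℝ)
    (B : Matrix (Fin m) (Fin n) ℝ)
    (Q : Matrix (Fin m) (Fin μ) ℝ) (hQ : Qᵀ * Q = 1)
    (R : Matrix (Fin μ) (Fin ℓ) ℝ) (Ω : Matrix (Fin n) (Fin ℓ) ℝ)
    (F : Matrix (Fin ℓ) (Fin n) ℝ) :
    frobNorm (A - Q * Qᵀ * A) ^ 2 ≤
      2 * frobNorm (B * Ω * F - A) ^ 2 + 2 * specNorm F ^ 2 * frobNorm (Q * R - B * Ω) ^ 2 := by
  set P := 1 - Q * Qᵀ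
  have hPQ : P * Q = 0 := by
    rw [Matrix.sub_mul, Matrix.one_mul, Matrix.mul_assoc, hQ, Matrix.mul_one, sub_self]
  have hPA : A - Q * Qᵀ * A = P * A := by
    rw [Matrix.sub_mul, Matrix.one_mul]
  have hdecomp : P * A = P * (A - B * Ω * F) + P * (B * Ω - Q * R) * F := by
    rw [Matrix.mul_sub P (B * Ω), ← Matrix.mul_assoc P Q, hPQ, Matrix.zero_mul, sub_zero,
      Matrix.mul_sub, Matrix.mul_assoc P (B * Ω)]
    abel
  have hfirst := frobNorm_one_sub_mul_transpose_mul_sq_le hQ (A - B * Ω * F)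
  have hsecond := frobNorm_one_sub_mul_transpose_mul_sq_le hQ (B * Ω - Q * R)
  rw [frobNorm_sub_comm] at hfirst hsecond
  calc frobNorm (A - Q * Qᵀ * A) ^ 2
      ≤ 2 * frobNorm (P * (A - B * Ω * F)) ^ 2 + 2 * frobNorm (P * (B * Ω - Q * R) * F) ^ 2 :=
        hPA ▸ hdecomp ▸ frobNorm_add_sq_le _ _
    _ ≤ 2 * frobNorm (B * Ω * F - A) ^ 2
          + 2 * (specNorm F ^ 2 * frobNorm (Q * R - B * Ω) ^ 2) := by
        gcongr
        exact (frobNorm_mul_sq_le_specNorm_sq _ F).trans (by gcongr)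
    _ = _ := by ring

/-- For `B = (AAᵀ)^q A` and orthonormal `Q`,
`‖A − QQᵀA‖_F² ≤ 2‖BΩF − A‖_F² + 2‖F‖₂²‖QR − BΩ‖_F²`. -/
theorem frob_sq_proj_le {m n μ ℓ : ℕ} (q : ℕ) (hμm : μ ≤ m)
    (A : Matrix (Fin m) (Fin n) ℝ)
    (B : Matrix (Fin m) (Fin n) ℝ) (hB : B = (A * Aᵀ) ^ q * A)
    (Q : Matrix (Fin m) (Fin μ) ℝ) (hQ : Qᵀ * Q = 1)
    (R : Matrix (Fin μ) (Fin ℓ) ℝ) (Ω : Matrix (Fin n) (Fin ℓ) ℝ)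
    (F : Matrix (Fin ℓ) (Fin n) ℝ) :
    frobNorm (A - Q * Qᵀ * A) ^ 2 ≤
      2 * frobNorm (B * Ω * F - A) ^ 2 + 2 * specNorm F ^ 2 * frobNorm (Q * R - B * Ω) ^ 2 :=
  frob_sq_proj_le_general A B Q hQ R Ω F
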